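/- Let T be a positive compact operator on a Hilbert space such that sup_{λ>e} σ_λ(T)/λ^{(p-1)/p} < ∞ for some p > 1 (i.e., T ∈ L^{p+}). Then T^p belongs to L^{1+}, i.e., sup_{λ>e} σ_λ(T^p)/ln λ < ∞. -/

import Mathlib

open scoped ENNReal

variable {H : Type*} [NormedAddCommGroup H] [InnerProductSpace ℂ H] [CompleteSpace H]

/-- The `n`-th singular value (approximation number) of an operator `T`. -/
noncomputable def singVal (T : H →L[ℂ] H) (n : ℕ) : ℝ :=
  sInf {c : ℝ | ∃ F : H →L[ℂ] H,
    FiniteDimensional ℂ (LinearMap.range (F : H →ₗ[ℂ] H)) ∧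
    Module.finrank ℂ (LinearMap.range (F : H →ₗ[ℂ] H)) ≤ n ∧ c = ‖T - F‖}

/-- The trace norm `‖S‖₁ = Σₙ μₙ(S)` as an extended nonnegative real. -/
noncomputable def traceNorm (S : H →L[ℂ] H) : ℝ≥0∞ :=
  ∑' n : ℕ, ENNReal.ofReal (singVal S n)

/-- The interpolated partial sum of singular values:
`σ_λ(T) = inf { ‖R‖₁ + λ‖S‖ : R + S = T, R, S compact }`. -/
noncomputable def sigmaL (T : H →L[ℂ] H) (l : ℝ) : ℝ≥0∞ :=
  ⨅ (R : H →L[ℂ] H) (S : H →L[ℂ] H) (_ : IsCompactOperator R)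
    (_ : IsCompactOperator S) (_ : R + S = T),
    traceNorm R + ENNReal.ofReal (l * ‖S‖)

/-!
Write `μ_m(T)` for `singVal T m`.

* Since `(m + 1) μ_m(R) ≤ ‖R‖₁`, every splitting `T = R + S` gives
  `(m + 1) μ_m(T) ≤ σ_λ(T)` for `λ ≥ m + 1`; taking `λ = 3(m + 1)` turns `T ∈ L^{p+}`
  into `μ_m(T)^p = O(1/m)`.
* For `t > μ_m(T)` the operator `T^p - min(T, t)^p` lives on the spectral subspace where
  `⟪T y, y⟫ ≥ t ‖y‖²`, and a min-max argument bounds its rank by `m`; hence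
  `μ_m(T^p) ≤ μ_m(T)^p`.
* An operator `X` with `μ_m(X) = O(1/m)` splits, at rank `N = ⌈λ⌉`, into a finite-rank part of
  trace norm `O(log λ)` and a remainder of norm `O(1/λ)`, so `σ_λ(X) = O(log λ)`.
-/

open scoped InnerProductSpace
open RCLike ContinuousLinearMap

set_option linter.unusedSectionVars false

def RankLE (F : H →L[ℂ] H) (n : ℕ) : Prop :=
  FiniteDimensional ℂ (LinearMap.range (F : H →ₗ[ℂ] H)) ∧
    Module.finrank ℂ (LinearMap.range (F : H →ₗ[ℂ] H)) ≤ n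

namespace RankLE

variable {F G : H →L[ℂ] H} {m n : ℕ}

theorem zero (n : ℕ) : RankLE (0 : H →L[ℂ] H) n := by
  refine ⟨?_, ?_⟩ <;> rw [toLinearMap_zero, LinearMap.range_zero]
  · infer_instance
  · simp

theorem mono (hF : RankLE F m) (h : m ≤ n) : RankLE F n :=
  ⟨hF.1, hF.2.trans h⟩

theorem add (hF : RankLE F m) (hG : RankLE G n) : RankLE (F + G) (m + n) := by
  obtain ⟨hFfin, hFrank⟩ := hF
  obtain ⟨hGfin, hGrank⟩ := hG
  have hle : LinearMap.range ((F + G : H →L[ℂ] H) : H →ₗ[ℂ] H) ≤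
      LinearMap.range (F : H →ₗ[ℂ] H) ⊔ LinearMap.range (G : H →ₗ[ℂ] H) := by
    rintro _ ⟨y, rfl⟩
    exact Submodule.add_mem_sup (LinearMap.mem_range_self _ y) (LinearMap.mem_range_self _ y)
  refine ⟨Submodule.finiteDimensional_of_le hle, ?_⟩
  calc _ ≤ _ := Submodule.finrank_mono hle
    _ ≤ _ := Submodule.finrank_add_le_finrank_add_finrank _ _
    _ ≤ m + n := add_le_add hFrank hGrank

theorem isCompactOperator (hF : RankLE F n) : IsCompactOperator F := by
  have := hF.1
  exact (isCompactOperator_of_locallyCompactSpace_dom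
    (F.codRestrict _ fun x => LinearMap.mem_range_self _ x)).continuous_comp continuous_subtype_val

end RankLE

section SingularValues

variable {T F : H →L[ℂ] H} {m n : ℕ}

theorem singVal_nonneg (T : H →L[ℂ] H) (n : ℕ) : 0 ≤ singVal T n :=
  Real.sInf_nonneg (by rintro _ ⟨F, -, -, rfl⟩; exact norm_nonneg _)

theorem singVal_le_norm_sub (hF : RankLE F n) : singVal T n ≤ ‖T - F‖ :=
  csInf_le ⟨0, by rintro _ ⟨F, -, -, rfl⟩; exact norm_nonneg _⟩ ⟨F, hF.1, hF.2, rfl⟩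

theorem exists_rankLE_norm_sub_lt {c : ℝ} (h : singVal T n < c) :
    ∃ F, RankLE F n ∧ ‖T - F‖ < c := by
  obtain ⟨_, ⟨F, hFfin, hFrank, rfl⟩, hlt⟩ :=
    exists_lt_of_csInf_lt
      (by exact ⟨‖T‖, 0, (RankLE.zero n).1, (RankLE.zero n).2, by simp⟩) h
  exact ⟨F, ⟨hFfin, hFrank⟩, hlt⟩

theorem singVal_le_norm (T : H →L[ℂ] H) (n : ℕ) : singVal T n ≤ ‖T‖ := by
  simpa using singVal_le_norm_sub (T := T) (RankLE.zero n)

theorem singVal_antitone (T : H →L[ℂ] H) : Antitone (singVal T) := fun _ _ hmn =>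
  le_of_forall_gt fun _ hc =>
    let ⟨_, hF, hTF⟩ := exists_rankLE_norm_sub_lt hc
    (singVal_le_norm_sub (hF.mono hmn)).trans_lt hTF

theorem singVal_add_le (A B : H →L[ℂ] H) (m n : ℕ) :
    singVal (A + B) (m + n) ≤ singVal A m + singVal B n := by
  refine le_of_forall_pos_lt_add fun ε hε => ?_
  obtain ⟨F, hF, hAF⟩ :=
    exists_rankLE_norm_sub_lt (lt_add_of_pos_right (singVal A m) (half_pos hε))
  obtain ⟨G, hG, hBG⟩ :=
    exists_rankLE_norm_sub_lt (lt_add_of_pos_right (singVal B n) (half_pos hε))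
  calc singVal (A + B) (m + n) ≤ ‖(A - F) + (B - G)‖ := by
        simpa only [add_sub_add_comm] using singVal_le_norm_sub (T := A + B) (hF.add hG)
    _ ≤ ‖A - F‖ + ‖B - G‖ := norm_add_le _ _
    _ < singVal A m + singVal B n + ε := by linarith

theorem singVal_eq_zero_of_rankLE (hT : RankLE T n) (hm : n ≤ m) : singVal T m = 0 :=
  le_antisymm (by simpa using singVal_le_norm_sub (T := T) (hT.mono hm)) (singVal_nonneg T m)

theorem traceNorm_eq_sum_of_rankLE (hF : RankLE F n) :
    traceNorm F = ∑ m ∈ Finset.range n, ENNReal.ofReal (singVal F m) :=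
  tsum_eq_sum fun m hm => by
    rw [singVal_eq_zero_of_rankLE hF (not_lt.mp (mt Finset.mem_range.mpr hm)),
      ENNReal.ofReal_zero]

theorem ofReal_mul_singVal_le_traceNorm (R : H →L[ℂ] H) (m : ℕ) :
    ENNReal.ofReal (((m : ℝ) + 1) * singVal R m) ≤ traceNorm R := by
  calc ENNReal.ofReal (((m : ℝ) + 1) * singVal R m)
      = (Finset.range (m + 1)).card • ENNReal.ofReal (singVal R m) := by
        rw [Finset.card_range, nsmul_eq_mul, ENNReal.ofReal_mul (by positivity)]
        norm_cast
    _ ≤ ∑ k ∈ Finset.range (m + 1), ENNReal.ofReal (singVal R k) :=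
        Finset.card_nsmul_le_sum _ _ _ fun k hk =>
          ENNReal.ofReal_le_ofReal <|
            singVal_antitone R (Nat.le_of_lt_succ (Finset.mem_range.mp hk))
    _ ≤ traceNorm R := ENNReal.sum_le_tsum _

theorem sigmaL_le_of_add_eq {R S : H →L[ℂ] H} (hR : IsCompactOperator R)
    (hS : IsCompactOperator S) (hRS : R + S = T) (l : ℝ) :
    sigmaL T l ≤ traceNorm R + ENNReal.ofReal (l * ‖S‖) :=
  iInf₂_le_of_le R S <| iInf₂_le_of_le hR hS <| iInf_le _ hRS

theorem ofReal_mul_singVal_le_sigmaL {l : ℝ} (hl : (m : ℝ) + 1 ≤ l) :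
    ENNReal.ofReal (((m : ℝ) + 1) * singVal T m) ≤ sigmaL T l := by
  refine le_iInf₂ fun R S => le_iInf₂ fun _ _ => le_iInf fun hRS => ?_
  have hT : singVal T m ≤ singVal R m + ‖S‖ := by
    simpa [← hRS] using (singVal_add_le R S m 0).trans
      (by gcongr; exact singVal_le_norm S 0)
  calc ENNReal.ofReal (((m : ℝ) + 1) * singVal T m)
      ≤ ENNReal.ofReal (((m : ℝ) + 1) * singVal R m) + ENNReal.ofReal (l * ‖S‖) := by
        have hl0 : 0 ≤ l := by linarith
        rw [← ENNReal.ofReal_add (by positivity [singVal_nonneg R m]) (by positivity)]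
        refine ENNReal.ofReal_le_ofReal ?_
        nlinarith [norm_nonneg S]
    _ ≤ traceNorm R + ENNReal.ofReal (l * ‖S‖) := by
        gcongr; exact ofReal_mul_singVal_le_traceNorm R m

end SingularValues

section FunctionalCalculus

variable {T : H →L[ℂ] H} {f : ℝ → ℝ} {t : ℝ}

theorem finrank_le_of_forall_re_inner_ge {V : Submodule ℂ H} {n : ℕ}
    (hV : ∀ y ∈ V, t * ‖y‖ ^ 2 ≤ re ⟪T y, y⟫_ℂ) (hn : singVal T n < t) :
    FiniteDimensional ℂ V ∧ Module.finrank ℂ V ≤ n := by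
  obtain ⟨F, ⟨hFfin, hFrank⟩, hTF⟩ := exists_rankLE_norm_sub_lt hn
  let φ : V →ₗ[ℂ] LinearMap.range (F : H →ₗ[ℂ] H) :=
    ((F : H →ₗ[ℂ] H).comp V.subtype).codRestrict _ fun y => LinearMap.mem_range_self _ _
  -- On `ker F`, `re ⟪T y, y⟫ ≤ ‖T - F‖ ‖y‖² < t ‖y‖²`, so `V ∩ ker F = 0`.
  have hφ : Function.Injective φ := by
    refine (injective_iff_map_eq_zero φ).mpr fun y hy => ?_
    have hFy : F y = 0 := congrArg Subtype.val hy
    by_contra hy0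
    have hy_pos : 0 < ‖(y : H)‖ := norm_pos_iff.mpr (by simpa using hy0)
    have hupper : re ⟪T y, y⟫_ℂ ≤ ‖T - F‖ * ‖(y : H)‖ ^ 2 := by
      calc re ⟪T y, y⟫_ℂ = re ⟪(T - F) y, y⟫_ℂ := by simp [hFy]
        _ ≤ ‖(T - F) y‖ * ‖(y : H)‖ := re_inner_le_norm _ _
        _ ≤ ‖T - F‖ * ‖(y : H)‖ * ‖(y : H)‖ := by gcongr; exact le_opNorm _ _
        _ = ‖T - F‖ * ‖(y : H)‖ ^ 2 := by ring
    nlinarith [hV y y.2, pow_pos hy_pos 2]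
  have := Module.Finite.of_injective φ hφ
  exact ⟨this, (LinearMap.finrank_le_finrank_of_injective hφ).trans hFrank⟩

theorem re_inner_ge_of_mem_range_cfc (hT : IsSelfAdjoint T) (hf : ContinuousOn f (spectrum ℝ T))
    (hf0 : ∀ x ∈ spectrum ℝ T, x < t → f x = 0) {y : H}
    (hy : y ∈ LinearMap.range ((cfc f T : H →L[ℂ] H) : H →ₗ[ℂ] H)) :
    t * ‖y‖ ^ 2 ≤ re ⟪T y, y⟫_ℂ := by
  obtain ⟨w, rfl⟩ := hy
  set B := cfc f T
  have hB : IsSelfAdjoint B := cfc_predicate f T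
  -- `B T B - t B² = cfc ((x - t) f(x)²) T`, which is positive since `f` vanishes below `t`.
  have hP : 0 ≤ B * T * B - t • (B * B) := by
    rw [← cfc_id' ℝ T, ← cfc_mul .., ← cfc_mul .., ← cfc_mul .., ← cfc_const_mul ..,
      ← cfc_sub ..]
    refine cfc_nonneg fun x hx => ?_
    rcases lt_or_ge x t with hxt | hxt
    · simp [hf0 x hx hxt]
    · nlinarith [mul_self_nonneg (f x)]
  have := ((nonneg_iff_isPositive _).mp hP).re_inner_nonneg_left w
  have hsymm : ∀ x z, ⟪B x, z⟫_ℂ = ⟪x, B z⟫_ℂ := hB.isSymmetric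
  simp only [sub_apply, mul_def, coe_comp, Function.comp_apply, smul_apply, inner_sub_left,
    map_sub] at this
  rw [real_smul_eq_coe_smul (K := ℂ), inner_smul_left, conj_ofReal, re_ofReal_mul,
    hsymm, hsymm, inner_self_eq_norm_sq] at this
  exact sub_nonneg.mp this

theorem rankLE_cfc_of_singVal_lt (hT : IsSelfAdjoint T) (hf : ContinuousOn f (spectrum ℝ T))
    (hf0 : ∀ x ∈ spectrum ℝ T, x < t → f x = 0) {n : ℕ} (hn : singVal T n < t) :
    RankLE (cfc f T) n :=
  finrank_le_of_forall_re_inner_ge (fun _ hy => re_inner_ge_of_mem_range_cfc hT hf hf0 hy) hn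

theorem singVal_cfc_rpow_le (hT : T.IsPositive) {p : ℝ} (hp : 0 < p) (m : ℕ) :
    singVal (cfc (fun x : ℝ => x ^ p) T) m ≤ singVal T m ^ p := by
  have hsa := hT.isSelfAdjoint
  have hspec : ∀ x ∈ spectrum ℝ T, 0 ≤ x := fun x hx =>
    spectrum_nonneg_of_nonneg ((nonneg_iff_isPositive T).mpr hT) hx
  have hcont : Continuous fun x : ℝ => x ^ p := Real.continuous_rpow_const hp.le
  have hcut : ∀ t, singVal T m < t → singVal (cfc (fun x : ℝ => x ^ p) T) m ≤ t ^ p := by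
    intro t ht
    have ht0 : 0 ≤ t := (singVal_nonneg T m).trans ht.le
    have hrank : RankLE (cfc (fun x : ℝ => x ^ p - min x t ^ p) T) m :=
      rankLE_cfc_of_singVal_lt hsa (by fun_prop) (fun x _ hx => by simp [min_eq_left hx.le]) ht
    have hsplit : cfc (fun x : ℝ => x ^ p) T - cfc (fun x : ℝ => x ^ p - min x t ^ p) T =
        cfc (fun x : ℝ => min x t ^ p) T := by
      rw [← cfc_sub ..]
      exact cfc_congr fun x _ => sub_sub_cancel _ _
    calc singVal (cfc (fun x : ℝ => x ^ p) T) m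
        ≤ ‖cfc (fun x : ℝ => min x t ^ p) T‖ := hsplit ▸ singVal_le_norm_sub hrank
      _ ≤ t ^ p := norm_cfc_le (by positivity) fun x hx => by
          have hmin : 0 ≤ min x t := le_min (hspec x hx) ht0
          rw [Real.norm_of_nonneg (by positivity)]
          exact Real.rpow_le_rpow hmin (min_le_right x t) hp.le
  exact ge_of_tendsto (hcont.continuousWithinAt (s := Set.Ioi (singVal T m)) (x := singVal T m))
    (eventually_nhdsWithin_of_forall hcut)

theorem isCompactOperator_cfc_rpow (hT : IsCompactOperator T) (hpos : T.IsPositive) {p : ℝ}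
    (hp : 1 ≤ p) : IsCompactOperator (cfc (fun x : ℝ => x ^ p) T : H →L[ℂ] H) := by
  have hsa := hpos.isSelfAdjoint
  have hfactor : cfc (fun x : ℝ => x ^ p) T = T * cfc (fun x : ℝ => x ^ (p - 1)) T := by
    calc cfc (fun x : ℝ => x ^ p) T = cfc (fun x : ℝ => x * x ^ (p - 1)) T :=
          cfc_congr fun x hx => by
            rw [← Real.rpow_one_add' (spectrum_nonneg_of_nonneg
              ((nonneg_iff_isPositive T).mpr hpos) hx) (by linarith), add_sub_cancel]
      _ = T * cfc (fun x : ℝ => x ^ (p - 1)) T := by rw [cfc_mul .., cfc_id' ℝ T]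
  rw [hfactor, mul_def, coe_comp]
  exact hT.comp_clm _

end FunctionalCalculus

section Ideals

variable {T : H →L[ℂ] H}

theorem exists_mul_singVal_rpow_le_of_sigmaL_le {p : ℝ} (hp : 0 < p) {C : ℝ≥0∞}
    (hC : C ≠ ⊤)
    (hσ : ∀ l : ℝ, Real.exp 1 < l → sigmaL T l ≤ C * ENNReal.ofReal (l ^ ((p - 1) / p))) :
    ∃ a : ℝ, ∀ m : ℕ, ((m : ℝ) + 1) * singVal T m ^ p ≤ a := by
  set q := (p - 1) / p
  set b := C.toReal * 3 ^ q
  refine ⟨b ^ p, fun m => ?_⟩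
  set k : ℝ := (m : ℝ) + 1
  have hk : 1 ≤ k := by simp [k]
  have hμ := singVal_nonneg T m
  -- Test `σ_λ` at `λ = 3k > e`.
  have hkμ : k * singVal T m ≤ b * k ^ q := by
    have hl : Real.exp 1 < 3 * k := by linarith [Real.exp_one_lt_d9]
    have := (ofReal_mul_singVal_le_sigmaL (T := T) (by linarith : k ≤ 3 * k)).trans (hσ _ hl)
    rwa [← ENNReal.ofReal_toReal hC, ← ENNReal.ofReal_mul ENNReal.toReal_nonneg,
      ENNReal.ofReal_le_ofReal_iff (by positivity), Real.mul_rpow (by norm_num) (by linarith),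
      ← mul_assoc] at this
  have hq : q * p = p - 1 := div_mul_cancel₀ _ hp.ne'
  have hpow : k ^ p * singVal T m ^ p ≤ b ^ p * k ^ (p - 1) := by
    rw [← Real.mul_rpow (by linarith) hμ, ← hq, Real.rpow_mul (by linarith), ← Real.mul_rpow
      (by positivity) (by positivity)]
    exact Real.rpow_le_rpow (by positivity) hkμ hp.le
  have hkp : k ^ p = k ^ (p - 1) * k := by
    rw [← Real.rpow_add_one (by positivity), sub_add_cancel]
  rw [hkp, mul_assoc, mul_comm (b ^ p)] at hpow
  exact le_of_mul_le_mul_left hpow (by positivity)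

theorem exists_sigmaL_le_log_of_mul_singVal_le {X : H →L[ℂ] H} (hX : IsCompactOperator X)
    {a : ℝ} (h : ∀ m : ℕ, ((m : ℝ) + 1) * singVal X m ≤ a) :
    ∃ C : ℝ≥0∞, C ≠ ⊤ ∧ ∀ l : ℝ, Real.exp 1 < l →
      sigmaL X l ≤ C * ENNReal.ofReal (Real.log l) := by
  have ha : 0 ≤ a := (singVal_nonneg X 0).trans (by simpa using h 0)
  refine ⟨ENNReal.ofReal (6 * a + 3), ENNReal.ofReal_ne_top, fun l hl => ?_⟩
  have hl0 : 0 < l := (Real.exp_pos 1).trans hl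
  have hlog : 1 ≤ Real.log l := (Real.le_log_iff_exp_le hl0).mpr hl.le
  have hl1 : 1 ≤ l := by linarith [Real.add_one_le_exp 1]
  set N := ⌈l⌉₊
  have hlN : l ≤ N := Nat.le_ceil l
  have hN2l : (N : ℝ) ≤ 2 * l := by linarith [Nat.ceil_lt_add_one hl0.le]
  have hlogN : Real.log N ≤ 1 + Real.log l := by
    calc Real.log N ≤ Real.log (2 * l) := Real.log_le_log (by linarith) hN2l
      _ = Real.log 2 + Real.log l := Real.log_mul two_ne_zero hl0.ne'
      _ ≤ 1 + Real.log l := by linarith [Real.log_two_lt_d9]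
  have hlogN0 : 0 ≤ Real.log N := Real.log_natCast_nonneg N
  -- Cut `X` at rank `N ≥ l`, where `μ_N(X) ≤ a / l`.
  obtain ⟨F, hF, hXF⟩ : ∃ F, RankLE F N ∧ ‖X - F‖ < (a + 1) / l := by
    refine exists_rankLE_norm_sub_lt ?_
    rw [lt_div_iff₀ hl0]
    nlinarith [h N, singVal_nonneg X N]
  have hμF : ∀ m : ℕ, singVal F m ≤ a / ((m : ℝ) + 1) + (a + 1) / l := by
    intro m
    have hsum := singVal_add_le X (F - X) m 0
    rw [add_sub_cancel, add_zero] at hsum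
    have hFX : singVal (F - X) 0 ≤ (a + 1) / l :=
      (singVal_le_norm _ 0).trans (norm_sub_rev F X ▸ hXF.le)
    have hXm : singVal X m ≤ a / ((m : ℝ) + 1) := by
      rw [le_div_iff₀ (by positivity), mul_comm]
      exact h m
    linarith
  have hharm : ∑ m ∈ Finset.range N, ((m : ℝ) + 1)⁻¹ ≤ 1 + Real.log N := by
    simpa [harmonic] using harmonic_le_one_add_log N
  have htr : traceNorm F ≤ ENNReal.ofReal (a * (1 + Real.log N) + 2 * (a + 1)) := by
    rw [traceNorm_eq_sum_of_rankLE hF,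
      ← ENNReal.ofReal_sum_of_nonneg fun m _ => singVal_nonneg F m]
    refine ENNReal.ofReal_le_ofReal ?_
    calc ∑ m ∈ Finset.range N, singVal F m
        ≤ ∑ m ∈ Finset.range N, (a / ((m : ℝ) + 1) + (a + 1) / l) :=
          Finset.sum_le_sum fun m _ => hμF m
      _ = a * ∑ m ∈ Finset.range N, ((m : ℝ) + 1)⁻¹ + N * (a + 1) / l := by
          simp [Finset.sum_add_distrib, Finset.mul_sum, div_eq_mul_inv, mul_assoc]
      _ ≤ a * (1 + Real.log N) + 2 * (a + 1) := by
          gcongr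
          rw [div_le_iff₀ hl0]
          nlinarith
  have hS : l * ‖X - F‖ ≤ a + 1 := by
    rw [← le_div_iff₀' hl0]
    exact hXF.le
  calc sigmaL X l ≤ traceNorm F + ENNReal.ofReal (l * ‖X - F‖) :=
        sigmaL_le_of_add_eq hF.isCompactOperator
          (by rw [FunLike.coe_sub]; exact hX.sub hF.isCompactOperator) (add_sub_cancel F X) l
    _ ≤ ENNReal.ofReal (a * (1 + Real.log N) + 2 * (a + 1)) + ENNReal.ofReal (a + 1) := by
        gcongr
    _ = ENNReal.ofReal (a * (1 + Real.log N) + 2 * (a + 1) + (a + 1)) :=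
        (ENNReal.ofReal_add (by positivity) (by positivity)).symm
    _ ≤ ENNReal.ofReal ((6 * a + 3) * Real.log l) := ENNReal.ofReal_le_ofReal (by nlinarith)
    _ = ENNReal.ofReal (6 * a + 3) * ENNReal.ofReal (Real.log l) :=
        ENNReal.ofReal_mul (by positivity)

end Ideals

/-- If `T` is a positive compact operator lying in `L^{p+}`
for some `p > 1`, i.e. `sup_{λ>e} σ_λ(T)/λ^{(p-1)/p} < ∞`, then `T^p`
(defined by the continuous functional calculus) belongs to the Dixmier ideal
`L^{1+}`, i.e. `sup_{λ>e} σ_λ(T^p)/ln λ < ∞`. -/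
theorem stmt_14 (T : H →L[ℂ] H) (hT : IsCompactOperator T)
    (hpos : T.IsPositive) (p : ℝ) (hp : 1 < p)
    (hbound : ∃ C : ℝ≥0∞, C ≠ ⊤ ∧ ∀ l : ℝ, Real.exp 1 < l →
      sigmaL T l ≤ C * ENNReal.ofReal (l ^ ((p - 1) / p))) :
    ∃ C : ℝ≥0∞, C ≠ ⊤ ∧ ∀ l : ℝ, Real.exp 1 < l →
      sigmaL (cfc (fun x : ℝ => x ^ p) T) l ≤ C * ENNReal.ofReal (Real.log l) := by
  have hp0 : 0 < p := one_pos.trans hp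
  obtain ⟨C, hC, hσ⟩ := hbound
  obtain ⟨a, ha⟩ := exists_mul_singVal_rpow_le_of_sigmaL_le hp0 hC hσ
  exact exists_sigmaL_le_log_of_mul_singVal_le (isCompactOperator_cfc_rpow hT hpos hp.le)
    fun m => (mul_le_mul_of_nonneg_left (singVal_cfc_rpow_le hpos hp0 m) (by positivity)).trans
      (ha m)
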